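/- arXiv:2605.04497 — 10 statements merged into one kernel-verified Lean document; each statement's English description precedes it below -/
import Mathlib

section
/- Let f be the path-dependent game f(A) = R · ∏_{j ∈ A ∩ M} q_j on subsets A of F. For S ⊆ F with S ⊆ M and any T ⊆ F \ S, the discrete derivative satisfies Δ_S f(T) = R · (∏_{j ∈ S} (q_j - 1)) · (∏_{j ∈ T ∩ (M \ S)} q_j). -/
/-- Discrete derivative of the path-dependent game, case `S ⊆ M`:
for `f(A) = R · ∏_{j ∈ A ∩ M} q_j`, `S ⊆ M` and `T ⊆ F \ S`,
`Δ_S f(T) = R · ∏_{j ∈ S} (q_j - 1) · ∏_{j ∈ T ∩ (M \ S)} q_j`. -/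
theorem discrete_deriv_path_dependent_of_subset {F : Type*} [Fintype F] [DecidableEq F]
    (M : Finset F) (R : ℝ) (q : F → ℝ)
    (f : Finset F → ℝ) (hf : ∀ A : Finset F, f A = R * ∏ j ∈ A ∩ M, q j)
    (S T : Finset F) (hSM : S ⊆ M) (hT : T ⊆ Sᶜ) :
    ∑ L ∈ S.powerset, (-1 : ℝ) ^ (S.card - L.card) * f (T ∪ L)
      = R * (∏ j ∈ S, (q j - 1)) * ∏ j ∈ T ∩ (M \ S), q j := by
  have hTS : Disjoint T S := by
    rw [Finset.disjoint_right]
    intro a haS haT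
    exact (Finset.mem_compl.mp (hT haT)) haS
  have key : ∀ L ∈ S.powerset,
      (-1 : ℝ) ^ (S.card - L.card) * f (T ∪ L)
        = (R * ∏ j ∈ T ∩ (M \ S), q j) * ((∏ j ∈ L, q j) * ∏ j ∈ S \ L, (-1 : ℝ)) := by
    intro L hL
    rw [Finset.mem_powerset] at hL
    have hset : (T ∪ L) ∩ M = (T ∩ (M \ S)) ∪ L := by
      ext a
      simp only [Finset.mem_inter, Finset.mem_union, Finset.mem_sdiff]
      constructor
      · rintro ⟨h1 | h1, h2⟩
        · left
          refine ⟨h1, h2, fun haS => (Finset.mem_compl.mp (hT h1)) haS⟩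
        · right; exact h1
      · rintro (⟨h1, h2, _⟩ | h1)
        · exact ⟨Or.inl h1, h2⟩
        · exact ⟨Or.inr h1, hSM (hL h1)⟩
    have hdisj : Disjoint (T ∩ (M \ S)) L := by
      refine Finset.disjoint_left.mpr fun a ha haL => ?_
      have := (Finset.mem_inter.mp ha).2
      exact (Finset.mem_sdiff.mp this).2 (hL haL)
    rw [hf, hset, Finset.prod_union hdisj, Finset.prod_const,
      Finset.card_sdiff_of_subset hL]
    ring
  rw [Finset.sum_congr rfl key, ← Finset.mul_sum, ← Finset.prod_add]
  have : ∀ j ∈ S, q j + (-1 : ℝ) = q j - 1 := fun j _ => by ring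
  rw [Finset.prod_congr rfl this]
  ring
end

section
/- Let f be the path-dependent game f(A) = R · ∏_{j ∈ A ∩ M} q_j on subsets A of F. For S ⊆ F not contained in M and any T ⊆ F \ S, the discrete derivative satisfies Δ_S f(T) = 0. -/
/-- Discrete derivative of the path-dependent game, case `S ⊄ M`:
for `f(A) = R · ∏_{j ∈ A ∩ M} q_j` and `T ⊆ F \ S`, `Δ_S f(T) = 0`. -/
theorem discrete_deriv_path_dependent_of_not_subset {F : Type*} [Fintype F] [DecidableEq F]
    (M : Finset F) (R : ℝ) (q : F → ℝ)
    (f : Finset F → ℝ) (hf : ∀ A : Finset F, f A = R * ∏ j ∈ A ∩ M, q j)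
    (S T : Finset F) (hSM : ¬ S ⊆ M) (hT : T ⊆ Sᶜ) :
    ∑ L ∈ S.powerset, (-1 : ℝ) ^ (S.card - L.card) * f (T ∪ L) = 0 := by
  obtain ⟨i, hiS, hiM⟩ := Finset.not_subset.mp hSM
  have hS : S = insert i (S.erase i) := (Finset.insert_erase hiS).symm
  have hi : i ∉ S.erase i := Finset.notMem_erase i S
  rw [hS, Finset.sum_powerset_insert hi, ← Finset.sum_add_distrib]
  apply Finset.sum_eq_zero
  intro L hL
  have hLS : L ⊆ S.erase i := Finset.mem_powerset.mp hL
  have hiL : i ∉ L := fun h => hi (hLS h)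
  have hcard : (insert i L).card = L.card + 1 := Finset.card_insert_of_notMem hiL
  have hcards : (insert i (S.erase i)).card = (S.erase i).card + 1 :=
    Finset.card_insert_of_notMem hi
  have hle : L.card ≤ (S.erase i).card := Finset.card_le_card hLS
  have hfeq : f (T ∪ L) = f (T ∪ insert i L) := by
    rw [hf, hf]
    congr 1
    apply Finset.prod_congr _ (fun _ _ => rfl)
    ext x
    simp only [Finset.mem_inter, Finset.mem_union, Finset.mem_insert]
    constructor
    · rintro ⟨h1, h2⟩; exact ⟨h1.imp_right Or.inr, h2⟩
    · rintro ⟨h1, h2⟩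
      refine ⟨?_, h2⟩
      rcases h1 with h | h | h
      · exact Or.inl h
      · exact absurd (h ▸ h2) hiM
      · exact Or.inr h
  rw [hfeq, hcard, hcards]
  have : (-1 : ℝ) ^ ((S.erase i).card + 1 - L.card) =
      -(-1 : ℝ) ^ ((S.erase i).card + 1 - (L.card + 1)) := by
    rw [Nat.add_sub_add_right, Nat.sub_add_comm hle, pow_succ]
    ring
  rw [this]; ring
end

section
/- Let f be the path-dependent game f(A) = R · ∏_{j ∈ A ∩ M} q_j on subsets A of F. For any S ⊆ F with S ⊆ M and any p ∈ ℝ, the weighted Banzhaf interaction value satisfies B_p^{(S)}(f) = R · (∏_{j ∈ S} (q_j - 1)) · (∏_{j ∈ M \ S} ((1-p) + p · q_j)). -/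
/-- Weighted Banzhaf interaction value of the path-dependent game, case `S ⊆ M`:
`B_p^{(S)}(f) = R · ∏_{j ∈ S} (q_j - 1) · ∏_{j ∈ M \ S} ((1-p) + p q_j)`. -/
theorem weighted_banzhaf_path_dependent_of_subset {F : Type*} [Fintype F] [DecidableEq F]
    (M : Finset F) (R : ℝ) (q : F → ℝ)
    (f : Finset F → ℝ) (hf : ∀ A : Finset F, f A = R * ∏ j ∈ A ∩ M, q j)
    (S : Finset F) (hSM : S ⊆ M) (p : ℝ) :
    ∑ T ∈ Sᶜ.powerset, p ^ T.card * (1 - p) ^ (Sᶜ.card - T.card) *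
        (∑ L ∈ S.powerset, (-1 : ℝ) ^ (S.card - L.card) * f (T ∪ L))
      = R * (∏ j ∈ S, (q j - 1)) * ∏ j ∈ M \ S, ((1 - p) + p * q j) := by
  have hinner : ∀ T ∈ Sᶜ.powerset,
      (∑ L ∈ S.powerset, (-1 : ℝ) ^ (S.card - L.card) * f (T ∪ L))
        = R * (∏ j ∈ T ∩ M, q j) * ∏ j ∈ S, (q j - 1) := by
    intro T hT
    rw [Finset.mem_powerset] at hT
    have key : ∀ L ∈ S.powerset,
        (-1 : ℝ) ^ (S.card - L.card) * f (T ∪ L)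
          = R * (∏ j ∈ T ∩ M, q j) * ((∏ j ∈ L, q j) * ∏ _j ∈ S \ L, (-1 : ℝ)) := by
      intro L hL
      rw [Finset.mem_powerset] at hL
      have hLM : L ∩ M = L := Finset.inter_eq_left.mpr (hL.trans hSM)
      have hdisj : Disjoint (T ∩ M) L :=
        Finset.disjoint_of_subset_left Finset.inter_subset_left
          (Finset.disjoint_of_subset_right hL
            (Disjoint.mono_left hT disjoint_compl_left))
      rw [hf, Finset.union_inter_distrib_right, hLM, Finset.prod_union hdisj,
        Finset.prod_const, Finset.card_sdiff_of_subset hL]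
      ring
    rw [Finset.sum_congr rfl key, ← Finset.mul_sum, ← Finset.prod_add]
    simp [sub_eq_add_neg]
  rw [Finset.sum_congr rfl (fun T hT => by rw [hinner T hT])]
  have key2 : ∀ T ∈ Sᶜ.powerset,
      p ^ T.card * (1 - p) ^ (Sᶜ.card - T.card) * (R * (∏ j ∈ T ∩ M, q j) * ∏ j ∈ S, (q j - 1))
        = (R * ∏ j ∈ S, (q j - 1)) *
          ((∏ j ∈ T, (p * if j ∈ M then q j else 1)) * ∏ _j ∈ Sᶜ \ T, (1 - p)) := by
    intro T hT
    rw [Finset.mem_powerset] at hT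
    rw [Finset.prod_mul_distrib, Finset.prod_const, Finset.prod_const,
      Finset.card_sdiff_of_subset hT, Finset.prod_ite_mem]
    ring
  rw [Finset.sum_congr rfl key2, ← Finset.mul_sum, ← Finset.prod_add]
  have hsub : M \ S ⊆ Sᶜ := fun j hj => by
    simp only [Finset.mem_compl]; exact (Finset.mem_sdiff.mp hj).2
  rw [← Finset.prod_subset hsub (fun j hj hj' => by
    have hjM : j ∉ M := fun hjM => hj' (Finset.mem_sdiff.mpr ⟨hjM, Finset.mem_compl.mp hj⟩)
    simp [hjM])]
  have : ∀ j ∈ M \ S, (p * if j ∈ M then q j else 1) + (1 - p) = (1 - p) + p * q j := by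
    intro j hj
    rw [if_pos (Finset.mem_sdiff.mp hj).1]; ring
  rw [Finset.prod_congr rfl this]
end

section
/- Let f be the path-dependent game f(A) = R · ∏_{j ∈ A ∩ M} q_j on subsets A of F. For any S ⊆ F that is not contained in M and any p ∈ ℝ, the weighted Banzhaf interaction value satisfies B_p^{(S)}(f) = 0. -/
/-- Weighted Banzhaf interaction value of the path-dependent game, case `S ⊄ M`:
`B_p^{(S)}(f) = 0`. -/
theorem weighted_banzhaf_path_dependent_of_not_subset {F : Type*} [Fintype F] [DecidableEq F]
    (M : Finset F) (R : ℝ) (q : F → ℝ)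
    (f : Finset F → ℝ) (hf : ∀ A : Finset F, f A = R * ∏ j ∈ A ∩ M, q j)
    (S : Finset F) (hSM : ¬ S ⊆ M) (p : ℝ) :
    ∑ T ∈ Sᶜ.powerset, p ^ T.card * (1 - p) ^ (Sᶜ.card - T.card) *
        (∑ L ∈ S.powerset, (-1 : ℝ) ^ (S.card - L.card) * f (T ∪ L)) = 0 := by
  obtain ⟨i, hiS, hiM⟩ := Finset.not_subset.mp hSM
  have hinner : ∀ T : Finset F,
      (∑ L ∈ S.powerset, (-1 : ℝ) ^ (S.card - L.card) * f (T ∪ L)) = 0 := by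
    intro T
    set S' := S.erase i with hS'
    have hiS' : i ∉ S' := Finset.notMem_erase i S
    have hins : S = insert i S' := (Finset.insert_erase hiS).symm
    have hcard : S.card = S'.card + 1 := by
      rw [hins, Finset.card_insert_of_notMem hiS']
    rw [hins, Finset.sum_powerset_insert hiS']
    rw [← Finset.sum_add_distrib]
    apply Finset.sum_eq_zero
    intro L hL
    have hLS' : L ⊆ S' := Finset.mem_powerset.mp hL
    have hiL : i ∉ L := fun h => hiS' (hLS' h)
    have hcardL : L.card ≤ S'.card := Finset.card_le_card hLS'
    have hfi : f (T ∪ insert i L) = f (T ∪ L) := by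
      rw [hf, hf]
      congr 1
      have : T ∪ insert i L = insert i (T ∪ L) := by
        ext x; simp [Finset.mem_insert, Finset.mem_union, or_left_comm]
      rw [this, Finset.insert_inter_of_notMem hiM]
    have hci : (insert i L).card = L.card + 1 := Finset.card_insert_of_notMem hiL
    rw [← hins, hfi, hci, hcard]
    have h1 : S'.card + 1 - L.card = (S'.card - L.card) + 1 := by omega
    have h2 : S'.card + 1 - (L.card + 1) = S'.card - L.card := by omega
    rw [h1, h2]
    ring
  calc ∑ T ∈ Sᶜ.powerset, p ^ T.card * (1 - p) ^ (Sᶜ.card - T.card) *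
        (∑ L ∈ S.powerset, (-1 : ℝ) ^ (S.card - L.card) * f (T ∪ L))
      = ∑ T ∈ Sᶜ.powerset, p ^ T.card * (1 - p) ^ (Sᶜ.card - T.card) * 0 := by
        apply Finset.sum_congr rfl; intro T _; rw [hinner]
    _ = 0 := by simp
end

section
/- For any set function f : Finset F → ℝ on a finite feature set F and any S ⊆ F, the Shapley interaction index satisfies SII(S) = ∫_0^1 B_p^{(S)}(f) dp, where the integral is the Lebesgue/Bochner integral of the polynomial function p ↦ B_p^{(S)}(f) over the unit interval. -/
open intervalIntegral Complex

lemma prod_fact_nat (a b : ℕ) :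
    (∏ j ∈ Finset.range (b + 1), (a + 1 + j)) * a.factorial = (a + b + 1).factorial := by
  induction b with
  | zero => simp [Nat.factorial_succ]
  | succ n ih =>
      rw [Finset.prod_range_succ, mul_right_comm, ih,
        show (a + (n+1) + 1).factorial = (a + n + 1 + 1) * (a + n + 1).factorial from by
          rw [show a + (n+1) + 1 = (a + n + 1) + 1 from by ring, Nat.factorial_succ]]
      ring

lemma prod_fact_aux (a b : ℕ) :
    (∏ j ∈ Finset.range (b + 1), ((a:ℂ) + 1 + j)) * (a.factorial : ℂ)
      = ((a + b + 1).factorial : ℂ) := by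
  have := prod_fact_nat a b
  have h2 : ((∏ j ∈ Finset.range (b + 1), (a + 1 + j)) * a.factorial : ℕ)
      = (((a + b + 1).factorial : ℕ) : ℂ) := by exact_mod_cast congrArg (Nat.cast : ℕ → ℂ) this
  push_cast at h2
  exact h2

lemma beta_nat (a b : ℕ) :
    ∫ x in (0:ℝ)..1, x ^ a * (1 - x) ^ b
      = (a.factorial * b.factorial : ℝ) / ((a + b + 1).factorial : ℝ) := by
  have h := Complex.betaIntegral_eval_nat_add_one_right
    (u := (a : ℂ) + 1) (by simp; positivity) b
  rw [Complex.betaIntegral] at h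
  have hint : (∫ x in (0:ℝ)..1, (x:ℂ) ^ ((a:ℂ) + 1 - 1) * (1 - (x:ℂ)) ^ ((b:ℂ) + 1 - 1))
      = ((∫ x in (0:ℝ)..1, x ^ a * (1 - x) ^ b : ℝ) : ℂ) := by
    rw [← intervalIntegral.integral_ofReal]
    refine intervalIntegral.integral_congr fun x hx => ?_
    push_cast
    rw [add_sub_cancel_right, add_sub_cancel_right, Complex.cpow_natCast,
      Complex.cpow_natCast]
    try push_cast
    try ring
  rw [hint] at h
  have hne : ((a + b + 1).factorial : ℂ) ≠ 0 :=
    Nat.cast_ne_zero.mpr (Nat.factorial_ne_zero _)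
  have hpne : (∏ j ∈ Finset.range (b + 1), ((a:ℂ) + 1 + j)) ≠ 0 := by
    refine Finset.prod_ne_zero_iff.mpr fun j _ => ?_
    intro hc
    have h1 := congrArg Complex.re hc
    simp at h1
    have : (0:ℝ) < a + 1 + j := by positivity
    linarith
  have key : ((∫ x in (0:ℝ)..1, x ^ a * (1 - x) ^ b : ℝ) : ℂ)
      = ((a.factorial * b.factorial / ((a + b + 1).factorial : ℝ) : ℝ) : ℂ) := by
    rw [h]
    push_cast
    rw [div_eq_div_iff hpne hne, ← prod_fact_aux a b]
    ring
  exact Complex.ofReal_inj.mp key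
/-- The Shapley interaction index is the integral over `p ∈ [0,1]` of the
weighted Banzhaf interaction values:
`SII(S) = ∫_0^1 B_p^{(S)}(f) dp`. -/
theorem sii_eq_integral_weighted_banzhaf {F : Type*} [Fintype F] [DecidableEq F]
    (f : Finset F → ℝ) (S : Finset F) :
    ∑ T ∈ Sᶜ.powerset,
        ((T.card.factorial * (Fintype.card F - S.card - T.card).factorial : ℝ) /
          ((Fintype.card F - S.card + 1).factorial : ℝ)) *
        (∑ L ∈ S.powerset, (-1 : ℝ) ^ (S.card - L.card) * f (T ∪ L))
      = ∫ p in (0:ℝ)..1,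
          ∑ T ∈ Sᶜ.powerset, p ^ T.card * (1 - p) ^ (Sᶜ.card - T.card) *
            (∑ L ∈ S.powerset, (-1 : ℝ) ^ (S.card - L.card) * f (T ∪ L)) := by
  rw [intervalIntegral.integral_finset_sum (fun T _ =>
    (Continuous.intervalIntegrable (by fun_prop) _ _))]
  refine Finset.sum_congr rfl fun T hT => ?_
  have hT' : T.card ≤ Sᶜ.card := Finset.card_le_card (Finset.mem_powerset.mp hT)
  have h1 : Fintype.card F - S.card = Sᶜ.card := (Finset.card_compl S).symm
  rw [intervalIntegral.integral_mul_const, beta_nat, h1,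
    show T.card + (Sᶜ.card - T.card) + 1 = Sᶜ.card + 1 from by omega]
end

section
/- For any set function f : Finset F → ℝ on a finite feature set F and any single feature i ∈ F, the Shapley value of i satisfies φ_i(f) = ∫_0^1 B_p^{({i})}(f) dp, where B_p^{({i})}(f) = Σ_{T ⊆ F \ {i}} p^{|T|} (1-p)^{|F|-1-|T|} (f(T ∪ {i}) - f(T)). -/
open intervalIntegral Complex

/-- First-order case: the Shapley value of a single feature `i` is the integral
over `p ∈ [0,1]` of its first-order weighted Banzhaf values:
`φ_i(f) = ∫_0^1 B_p^{({i})}(f) dp`. -/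
theorem shapley_eq_integral_weighted_banzhaf {F : Type*} [Fintype F] [DecidableEq F]
    (f : Finset F → ℝ) (i : F) :
    ∑ T ∈ ({i} : Finset F)ᶜ.powerset,
        ((T.card.factorial * (Fintype.card F - 1 - T.card).factorial : ℝ) /
          ((Fintype.card F).factorial : ℝ)) * (f (T ∪ {i}) - f T)
      = ∫ p in (0:ℝ)..1,
          ∑ T ∈ ({i} : Finset F)ᶜ.powerset,
            p ^ T.card * (1 - p) ^ (Fintype.card F - 1 - T.card) *
              (f (T ∪ {i}) - f T) := by
  have hint : ∀ T ∈ ({i} : Finset F)ᶜ.powerset,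
      IntervalIntegrable
        (fun p : ℝ => p ^ T.card * (1 - p) ^ (Fintype.card F - 1 - T.card) *
          (f (T ∪ {i}) - f T)) MeasureTheory.volume 0 1 := by
    intro T _
    apply Continuous.intervalIntegrable
    fun_prop
  rw [intervalIntegral.integral_finset_sum hint]
  refine Finset.sum_congr rfl fun T hT => ?_
  have hTsub : T ⊆ ({i} : Finset F)ᶜ := Finset.mem_powerset.mp hT
  have hcard : T.card ≤ Fintype.card F - 1 := by
    have := Finset.card_le_card hTsub
    have h1 : ({i} : Finset F)ᶜ.card = Fintype.card F - 1 := by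
      rw [Finset.card_compl, Finset.card_singleton]
    omega
  have hn : 1 ≤ Fintype.card F := Fintype.card_pos_iff.mpr ⟨i⟩
  have hsum : T.card + (Fintype.card F - 1 - T.card) + 1 = Fintype.card F := by omega
  rw [intervalIntegral.integral_mul_const, beta_nat, hsum]
end

section
/- Let f be the path-dependent game f(A) = R · ∏_{j ∈ A ∩ M} q_j on subsets A of F. For any S ⊆ F with S ⊆ M, the Shapley interaction index satisfies SII(S) = R · (∏_{j ∈ S} (q_j - 1)) · ∫_0^1 ∏_{j ∈ M \ S} ((1-p) + p · q_j) dp. -/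
/-!
Put `c j = q j` for `j ∈ M` and `c j = 1` otherwise, so that `f A = R * ∏_{j ∈ A} c j` is
multiplicative and its discrete derivative at `T` is `R * ∏_{T} c * ∏_{S} (c j - 1)`. The Shapley
weight `|T|! (n - s - |T|)! / (n - s + 1)!` is the Beta integral `∫₀¹ p^|T| (1 - p)^(n - s - |T|) dp`,
so the weighted sum over `T ⊆ F \ S` is the integral of the multilinear extension
`∏_{j ∉ S} ((1 - p) + p c j)`, whose factors off `M` are `1`.
-/

open Finset Nat

theorem integral_pow_mul_one_sub_pow (m k : ℕ) :
    ∫ x in (0:ℝ)..1, x ^ m * (1 - x) ^ k = (m ! * k ! : ℝ) / (m + k + 1)! := by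
  induction k generalizing m with
  | zero =>
    simp only [pow_zero, mul_one, integral_pow, Nat.factorial_succ (m + 0)]
    push_cast
    field_simp
    simp
  | succ k ih =>
    have hsplit : ∀ x : ℝ,
        x ^ m * (1 - x) ^ (k + 1) = x ^ m * (1 - x) ^ k - x ^ (m + 1) * (1 - x) ^ k :=
      fun x => by ring
    simp_rw [hsplit]
    rw [intervalIntegral.integral_sub (by apply Continuous.intervalIntegrable; fun_prop)
        (by apply Continuous.intervalIntegrable; fun_prop), ih, ih,
      show m + 1 + k + 1 = m + (k + 1) + 1 by ring]
    simp only [Nat.factorial_succ, Nat.add_succ]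
    push_cast
    field_simp
    ring

theorem sum_powerset_neg_one_pow_mul_prod_union {ι R : Type*} [CommRing R] [DecidableEq ι]
    (c : ι → R) {S T : Finset ι} (hTS : Disjoint T S) :
    ∑ L ∈ S.powerset, (-1) ^ (#S - #L) * ∏ j ∈ T ∪ L, c j
      = (∏ j ∈ T, c j) * ∏ j ∈ S, (c j - 1) := by
  simp_rw [sub_eq_add_neg, prod_add, prod_const, mul_sum]
  refine sum_congr rfl fun L hL => ?_
  have hLS := mem_powerset.mp hL
  rw [prod_union (hTS.mono_right hLS), card_sdiff_of_subset hLS]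
  ring

theorem prod_one_sub_add_mul_eq_sum_powerset {ι R : Type*} [CommRing R] [DecidableEq ι]
    (c : ι → R) (U : Finset ι) (p : R) :
    ∏ j ∈ U, ((1 - p) + p * c j)
      = ∑ T ∈ U.powerset, (∏ j ∈ T, c j) * (p ^ #T * (1 - p) ^ (#U - #T)) := by
  simp_rw [add_comm (1 - p), prod_add, prod_mul_distrib, prod_const]
  refine sum_congr rfl fun T hT => ?_
  rw [card_sdiff_of_subset (mem_powerset.mp hT)]
  ring

theorem integral_prod_one_sub_add_mul {ι : Type*} [DecidableEq ι] (c : ι → ℝ) (U : Finset ι) :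
    ∫ p in (0:ℝ)..1, ∏ j ∈ U, ((1 - p) + p * c j)
      = ∑ T ∈ U.powerset, (((#T)! * (#U - #T)! : ℝ) / (#U + 1)!) * ∏ j ∈ T, c j := by
  simp_rw [prod_one_sub_add_mul_eq_sum_powerset]
  rw [intervalIntegral.integral_finsetSum fun T _ => by
    apply Continuous.intervalIntegrable; fun_prop]
  refine sum_congr rfl fun T hT => ?_
  rw [intervalIntegral.integral_const_mul, integral_pow_mul_one_sub_pow,
    Nat.add_sub_cancel' (card_le_card (mem_powerset.mp hT)), mul_comm]

/-- Shapley interaction values of the path-dependent game, case `S ⊆ M`: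
`SII(S) = R · ∏_{j ∈ S} (q_j - 1) · ∫_0^1 ∏_{j ∈ M \ S} ((1-p) + p q_j) dp`. -/
theorem sii_path_dependent_of_subset {F : Type*} [Fintype F] [DecidableEq F]
    (M : Finset F) (R : ℝ) (q : F → ℝ)
    (f : Finset F → ℝ) (hf : ∀ A : Finset F, f A = R * ∏ j ∈ A ∩ M, q j)
    (S : Finset F) (hSM : S ⊆ M) :
    ∑ T ∈ Sᶜ.powerset,
        ((T.card.factorial * (Fintype.card F - S.card - T.card).factorial : ℝ) /
          ((Fintype.card F - S.card + 1).factorial : ℝ)) *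
        (∑ L ∈ S.powerset, (-1 : ℝ) ^ (S.card - L.card) * f (T ∪ L))
      = R * (∏ j ∈ S, (q j - 1)) *
          ∫ p in (0:ℝ)..1, ∏ j ∈ M \ S, ((1 - p) + p * q j) := by
  set c : F → ℝ := fun j => if j ∈ M then q j else 1
  have hfc : ∀ A, f A = R * ∏ j ∈ A, c j := fun A => by simp [hf, c]
  have hcS : ∏ j ∈ S, (c j - 1) = ∏ j ∈ S, (q j - 1) :=
    prod_congr rfl fun j hj => by simp [c, hSM hj]
  have hcM : ∀ p : ℝ, ∏ j ∈ M \ S, ((1 - p) + p * q j) = ∏ j ∈ Sᶜ, ((1 - p) + p * c j) := by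
    intro p
    simp [c, apply_ite, sdiff_eq_inter_compl, inter_comm]
  simp_rw [hcM, integral_prod_one_sub_add_mul, ← card_compl, mul_sum]
  refine sum_congr rfl fun T hT => ?_
  have hTS : Disjoint T S := subset_compl_iff_disjoint_right.mp (mem_powerset.mp hT)
  simp_rw [hfc, mul_left_comm _ R, ← mul_sum, sum_powerset_neg_one_pow_mul_prod_union c hTS, hcS]
  ring
end

section
/- Let f be the path-dependent game f(A) = R · ∏_{j ∈ A ∩ M} q_j on subsets A of F. For any S ⊆ F that is not contained in M, the Shapley interaction index satisfies SII(S) = 0. -/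
/-- Shapley interaction values of the path-dependent game, case `S ⊄ M`:
`SII(S) = 0`. -/
theorem sii_path_dependent_of_not_subset {F : Type*} [Fintype F] [DecidableEq F]
    (M : Finset F) (R : ℝ) (q : F → ℝ)
    (f : Finset F → ℝ) (hf : ∀ A : Finset F, f A = R * ∏ j ∈ A ∩ M, q j)
    (S : Finset F) (hSM : ¬ S ⊆ M) :
    ∑ T ∈ Sᶜ.powerset,
        ((T.card.factorial * (Fintype.card F - S.card - T.card).factorial : ℝ) /
          ((Fintype.card F - S.card + 1).factorial : ℝ)) *
        (∑ L ∈ S.powerset, (-1 : ℝ) ^ (S.card - L.card) * f (T ∪ L)) = 0 := by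
  obtain ⟨i, hiS, hiM⟩ : ∃ i, i ∈ S ∧ i ∉ M := by
    simpa [Finset.subset_iff] using hSM
  apply Finset.sum_eq_zero
  intro T hT
  have key : ∑ L ∈ S.powerset, (-1 : ℝ) ^ (S.card - L.card) * f (T ∪ L) = 0 := by
    have hS : S = insert i (S.erase i) := (Finset.insert_erase hiS).symm
    have hi' : i ∉ S.erase i := Finset.notMem_erase i S
    rw [hS, Finset.sum_powerset_insert hi']
    rw [← Finset.sum_add_distrib]
    apply Finset.sum_eq_zero
    intro L hL
    have hiL : i ∉ L := fun h => hi' (Finset.mem_powerset.mp hL h)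
    have hfeq : f (T ∪ insert i L) = f (T ∪ L) := by
      rw [hf, hf]
      congr 1
      apply Finset.prod_congr _ (fun _ _ => rfl)
      rw [Finset.union_insert, Finset.insert_inter_of_notMem hiM]
    have hcard : (insert i L).card = L.card + 1 := Finset.card_insert_of_notMem hiL
    have hcardS : (insert i (S.erase i)).card = (S.erase i).card + 1 :=
      Finset.card_insert_of_notMem hi'
    have hLle : L.card ≤ (S.erase i).card :=
      Finset.card_le_card (Finset.mem_powerset.mp hL)
    rw [hfeq, hcard, hcardS]
    have h1 : (S.erase i).card + 1 - L.card = ((S.erase i).card - L.card) + 1 := by omega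
    have h2 : (S.erase i).card + 1 - (L.card + 1) = (S.erase i).card - L.card := by omega
    rw [h1, h2, pow_succ]
    ring
  rw [key, mul_zero]
end

section
/- Let V be a finite index set of leaves, and for each leaf v ∈ V let M(v) ⊆ F with |M(v)| ≤ d, let R_v ∈ ℝ and α^v : F → ℝ. Fix S ⊆ F with |S| = s ≤ d and S ⊆ M(v) for every v ∈ V, and define I_S(t) = Σ_{v ∈ V} R_v · (∏_{j ∈ S} α_j^v) · (∏_{j ∈ M(v) \ S} (1 + α_j^v · t)). Let n be a positive integer with n ≥ ⌈(d - s + 1)/2⌉, and let (t_1, w_1), …, (t_n, w_n) be real nodes and weights such that Σ_{m=1}^n w_m · P(t_m) = ∫_0^1 P(t) dt for every real polynomial P of degree at most 2n - 1. Then Σ_{m=1}^n w_m · I_S(t_m) = ∫_0^1 I_S(t) dt. -/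
/-- Gauss–Legendre-style exactness for the order-`s` Shapley interaction integrand:
if a quadrature rule with `n ≥ ⌈(d - s + 1)/2⌉` nodes integrates every real polynomial
of degree at most `2n - 1` exactly over `[0,1]`, then it integrates
`I_S(t) = Σ_{v ∈ V} R_v (∏_{j ∈ S} α_j^v) ∏_{j ∈ M(v) \ S} (1 + α_j^v t)` exactly. -/
theorem quadrature_exact_for_integrand {F ι : Type*} [Fintype F] [DecidableEq F]
    (V : Finset ι) (M : ι → Finset F) (R : ι → ℝ) (α : ι → F → ℝ)
    (d s : ℕ) (hsd : s ≤ d) (hM : ∀ v ∈ V, (M v).card ≤ d)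
    (S : Finset F) (hS : S.card = s) (hSM : ∀ v ∈ V, S ⊆ M v)
    (n : ℕ) (hn0 : 0 < n) (hn : n ≥ (d - s + 1 + 1) / 2)
    (t w : ℕ → ℝ)
    (hquad : ∀ P : Polynomial ℝ, P.natDegree ≤ 2 * n - 1 →
      ∑ m ∈ Finset.range n, w m * P.eval (t m) = ∫ x in (0:ℝ)..1, P.eval x) :
    ∑ m ∈ Finset.range n, w m *
        (∑ v ∈ V, R v * (∏ j ∈ S, α v j) * ∏ j ∈ (M v) \ S, (1 + α v j * t m))
      = ∫ x in (0:ℝ)..1,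
          ∑ v ∈ V, R v * (∏ j ∈ S, α v j) * ∏ j ∈ (M v) \ S, (1 + α v j * x) := by
  set P : Polynomial ℝ := ∑ v ∈ V, Polynomial.C (R v * ∏ j ∈ S, α v j) *
      ∏ j ∈ (M v) \ S, (1 + Polynomial.C (α v j) * Polynomial.X) with hP
  have heval : ∀ x : ℝ, P.eval x
      = ∑ v ∈ V, R v * (∏ j ∈ S, α v j) * ∏ j ∈ (M v) \ S, (1 + α v j * x) := by
    intro x
    simp [hP, Polynomial.eval_finset_sum, Polynomial.eval_prod]
  have hdeg : P.natDegree ≤ 2 * n - 1 := by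
    have hbound : d - s ≤ 2 * n - 1 := by omega
    refine le_trans (Polynomial.natDegree_sum_le_of_forall_le _ _ ?_) hbound
    intro v hv
    refine le_trans (Polynomial.natDegree_mul_le) ?_
    simp only [Polynomial.natDegree_C, zero_add]
    calc (∏ j ∈ (M v) \ S, (1 + Polynomial.C (α v j) * Polynomial.X)).natDegree
        ≤ ∑ j ∈ (M v) \ S, (1 + Polynomial.C (α v j) * Polynomial.X).natDegree :=
          Polynomial.natDegree_prod_le _ _
      _ ≤ ∑ j ∈ (M v) \ S, 1 := by
          refine Finset.sum_le_sum fun j _ => ?_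
          refine le_trans (Polynomial.natDegree_add_le _ _) ?_
          simp [Polynomial.natDegree_C_mul_le]
          exact le_trans (Polynomial.natDegree_mul_le) (by simp)
      _ = ((M v) \ S).card := by simp
      _ ≤ d - s := by
          rw [Finset.card_sdiff_of_subset (hSM v hv), hS]
          exact Nat.sub_le_sub_right (hM v hv) s
  have := hquad P hdeg
  simp only [heval] at this
  exact this
end

section
/- Let f be the path-dependent game f(A) = R · ∏_{j ∈ A ∩ M} q_j on subsets A of F, let S ⊆ M with |S| = s, and let d be a natural number with |M| ≤ d and s ≤ d. Then the function p ↦ B_p^{(S)}(f), viewed as a real polynomial in p, has degree at most d - s. -/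
open Polynomial

/-- The weighted Banzhaf interaction value of the path-dependent game,
`p ↦ B_p^{(S)}(f) = Σ_{T ⊆ F \ S} p^{|T|} (1-p)^{|F \ S| - |T|} Δ_S f(T)`,
viewed as a real polynomial in `p`, has degree at most `d - s`. -/
theorem weighted_banzhaf_natDegree_le {F : Type*} [Fintype F] [DecidableEq F]
    (M : Finset F) (R : ℝ) (q : F → ℝ)
    (f : Finset F → ℝ) (hf : ∀ A : Finset F, f A = R * ∏ j ∈ A ∩ M, q j)
    (S : Finset F) (hSM : S ⊆ M) (d s : ℕ) (hS : S.card = s)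
    (hMd : M.card ≤ d) (hsd : s ≤ d) :
    (∑ T ∈ Sᶜ.powerset,
        X ^ T.card * (1 - X) ^ (Sᶜ.card - T.card) *
          C (∑ L ∈ S.powerset, (-1 : ℝ) ^ (S.card - L.card) * f (T ∪ L))
        : Polynomial ℝ).natDegree ≤ d - s := by
  classical
  set qt : F → ℝ := fun j => if j ∈ M then q j else 1 with hqt
  set c : ℝ := R * ∏ j ∈ S, (q j - 1) with hc
  have key : (∑ T ∈ Sᶜ.powerset,
        X ^ T.card * (1 - X) ^ (Sᶜ.card - T.card) *
          C (∑ L ∈ S.powerset, (-1 : ℝ) ^ (S.card - L.card) * f (T ∪ L))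
        : Polynomial ℝ)
      = C c * ∏ j ∈ Sᶜ, (C (qt j) * X + (1 - X)) := by
    have hinner : ∀ T ∈ Sᶜ.powerset,
        (∑ L ∈ S.powerset, (-1 : ℝ) ^ (S.card - L.card) * f (T ∪ L))
        = c * ∏ j ∈ T ∩ M, q j := by
      intro T hT
      rw [Finset.mem_powerset] at hT
      have hfL : ∀ L ∈ S.powerset,
          f (T ∪ L) = R * ((∏ j ∈ T ∩ M, q j) * ∏ j ∈ L, q j) := by
        intro L hL
        rw [Finset.mem_powerset] at hL
        have hdisj : Disjoint (T ∩ M) L := by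
          rw [Finset.disjoint_left]
          intro x hx hxL
          have hxS : x ∈ S := hL hxL
          have := hT (Finset.mem_inter.mp hx).1
          simp [Finset.mem_compl, hxS] at this
        rw [hf, Finset.union_inter_distrib_right,
          Finset.inter_eq_left.mpr (hL.trans hSM), Finset.prod_union hdisj]
      have hprod : ∏ j ∈ S, (q j - 1)
          = ∑ L ∈ S.powerset, (∏ j ∈ L, q j) * (-1:ℝ) ^ (S.card - L.card) := by
        have h1 : ∏ j ∈ S, (q j - 1) = ∏ j ∈ S, (q j + (-1)) := by
          apply Finset.prod_congr rfl; intros; ring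
        rw [h1, Finset.prod_add]
        apply Finset.sum_congr rfl
        intro L hL
        rw [Finset.mem_powerset] at hL
        rw [Finset.prod_const, Finset.card_sdiff_of_subset hL]
      rw [hc, hprod, Finset.mul_sum, Finset.sum_mul]
      apply Finset.sum_congr rfl
      intro L hL
      rw [hfL L hL]; ring
    rw [show (∑ T ∈ Sᶜ.powerset,
        X ^ T.card * (1 - X) ^ (Sᶜ.card - T.card) *
          C (∑ L ∈ S.powerset, (-1 : ℝ) ^ (S.card - L.card) * f (T ∪ L))
        : Polynomial ℝ) = ∑ T ∈ Sᶜ.powerset,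
        X ^ T.card * (1 - X) ^ (Sᶜ.card - T.card) * C (c * ∏ j ∈ T ∩ M, q j)
      from Finset.sum_congr rfl fun T hT => by rw [hinner T hT]]
    have hexp : (∏ j ∈ Sᶜ, (C (qt j) * X + (1 - X)) : Polynomial ℝ)
        = ∑ T ∈ Sᶜ.powerset,
            X ^ T.card * (1 - X) ^ (Sᶜ.card - T.card) * C (∏ j ∈ T ∩ M, q j) := by
      rw [Finset.prod_add]
      apply Finset.sum_congr rfl
      intro T hT
      rw [Finset.mem_powerset] at hT
      have h1 : (∏ j ∈ T, (C (qt j) * X) : Polynomial ℝ)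
          = C (∏ j ∈ T ∩ M, q j) * X ^ T.card := by
        rw [Finset.prod_mul_distrib, Finset.prod_const, ← map_prod]
        congr 2
        rw [← Finset.prod_filter, Finset.filter_mem_eq_inter]
      rw [h1, Finset.prod_const, Finset.card_sdiff_of_subset hT]
      ring
    rw [hexp, Finset.mul_sum]
    apply Finset.sum_congr rfl
    intro T hT
    rw [map_mul]
    ring
  rw [key]
  have hsub : (∏ j ∈ Sᶜ, (C (qt j) * X + (1 - X)) : Polynomial ℝ)
      = ∏ j ∈ M \ S, (C (qt j) * X + (1 - X)) := by
    symm
    apply Finset.prod_subset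
    · intro x hx
      simp only [Finset.mem_sdiff] at hx
      simp [Finset.mem_compl, hx.2]
    · intro x hx hxn
      have hxM : x ∉ M := by
        intro hxM
        exact hxn (Finset.mem_sdiff.mpr ⟨hxM, by simpa [Finset.mem_compl] using hx⟩)
      simp only [hqt, if_neg hxM, map_one, one_mul]
      ring
  rw [hsub]
  calc (C c * ∏ j ∈ M \ S, (C (qt j) * X + (1 - X)) : Polynomial ℝ).natDegree
      ≤ (∏ j ∈ M \ S, (C (qt j) * X + (1 - X)) : Polynomial ℝ).natDegree :=
        natDegree_C_mul_le _ _
    _ ≤ ∑ j ∈ M \ S, (C (qt j) * X + (1 - X) : Polynomial ℝ).natDegree :=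
        natDegree_prod_le _ _
    _ ≤ ∑ _j ∈ M \ S, 1 := by
        apply Finset.sum_le_sum
        intro j _
        refine (natDegree_add_le _ _).trans (max_le ?_ ?_)
        · exact (natDegree_C_mul_le _ _).trans (by simp)
        · exact (natDegree_sub_le _ _).trans (by simp)
    _ = M.card - s := by rw [Finset.sum_const, smul_eq_mul, mul_one,
        Finset.card_sdiff_of_subset hSM, hS]
    _ ≤ d - s := Nat.sub_le_sub_right hMd s
end
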